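/- arXiv:1408.1350 — 7 statements merged into one kernel-verified Lean document; each statement's English description precedes it below -/
import Mathlib

section
/- For all real numbers β, x, T with 0 < β < 1 < T and x ≥ 0, one has 1/(β·x + e^{-T·x}) ≤ T/(β·ln(T/β)). -/
/-! Writing `L = log (T / β)`, one has `exp (-T x) = (β / T) exp (L - T x)`, and the tangent-line
bound `1 + y ≤ exp y` at `y = L - T x` turns this into `β x + exp (-T x) ≥ (β / T) (1 + L)` for
every real `x`; the right-hand side exceeds `β L / T > 0`. -/

open Real

lemma mul_div_one_add_log_div_le_mul_add_exp_neg_mul {β T : ℝ} (hβ : 0 < β) (hT : 0 < T)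
    (x : ℝ) : β / T * (1 + log (T / β)) ≤ β * x + exp (-T * x) := by
  have hexp : exp (-T * x) = β / T * exp (log (T / β) - T * x) := by
    rw [exp_sub, exp_log (by positivity), neg_mul, exp_neg]
    field_simp
  have htangent := add_one_le_exp (log (T / β) - T * x)
  have hβT : 0 ≤ β / T := by positivity
  calc β / T * (1 + log (T / β))
      = β * x + β / T * (log (T / β) - T * x + 1) := by field_simp; ring
    _ ≤ β * x + exp (-T * x) := by rw [hexp]; gcongr

theorem key_inequality_general (β x T : ℝ) (hβ0 : 0 < β) (hβ1 : β < 1) (hT : 1 < T) :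
    1 / (β * x + Real.exp (-T * x)) ≤ T / (β * Real.log (T / β)) := by
  have hT0 : 0 < T := one_pos.trans hT
  have hL : 0 < log (T / β) := log_pos ((one_lt_div hβ0).2 (hβ1.trans hT))
  have hbound : β / T * log (T / β) ≤ β * x + exp (-T * x) :=
    calc β / T * log (T / β) ≤ β / T * (1 + log (T / β)) := by gcongr; linarith
      _ ≤ β * x + exp (-T * x) := mul_div_one_add_log_div_le_mul_add_exp_neg_mul hβ0 hT0 x
  calc 1 / (β * x + exp (-T * x)) ≤ 1 / (β / T * log (T / β)) :=
        one_div_le_one_div_of_le (by positivity) hbound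
    _ = T / (β * log (T / β)) := by field_simp

theorem key_inequality (β x T : ℝ) (hβ0 : 0 < β) (hβ1 : β < 1) (hT : 1 < T)
    (hx : 0 ≤ x) :
    1 / (β * x + Real.exp (-T * x)) ≤ T / (β * Real.log (T / β)) :=
  key_inequality_general β x T hβ0 hβ1 hT
end

section
/- Let 0 < β < 1, T > 0, λ > 0, and t ∈ [0, T]. Then Φ(β, λ, t) := e^{-√λ(T-t)} / (2β√λ + 2e^{-√λ T}) satisfies Φ(β, λ, t) ≤ (1/2) · (β/T)^{-t/T} · (ln(T/β))^{-t/T}, provided T > β. -/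
/-!
Write `s = √λ`, `θ = t / T` and `A = β s + e^{-sT}`. Then `e^{-s(T-t)} = (e^{-sT})^{1-θ} ≤ A^{1-θ}`,
so `Φ ≤ A^{-θ} / 2`. The function `x ↦ β x + e^{-T x}` is minimal at `x = ln(T/β) / T`, hence
`A ≥ (β/T) ln(T/β) =: M`, and `A^{-θ} ≤ M^{-θ}`, which is the claimed bound.
-/

open Real

/-- The left side is the minimum of `x ↦ β x + e^{-T x}`, attained at `x = ln(T/β) / T`. -/
lemma div_mul_log_add_one_le_mul_add_exp {β T : ℝ} (hβ : 0 < β) (hT : 0 < T) (x : ℝ) :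
    β / T * (log (T / β) + 1) ≤ β * x + exp (-x * T) := by
  have hexp : exp (-x * T) = β / T * exp (-x * T + log (T / β)) := by
    rw [exp_add, exp_log (by positivity)]
    field_simp
  calc β / T * (log (T / β) + 1) = β * x + β / T * (-x * T + log (T / β) + 1) := by
        field_simp; ring
    _ ≤ β * x + exp (-x * T) := by
        rw [hexp]; gcongr; exact add_one_le_exp _

lemma div_mul_log_le_mul_add_exp {β T : ℝ} (hβ : 0 < β) (hT : 0 < T) (x : ℝ) :
    β / T * log (T / β) ≤ β * x + exp (-x * T) := by
  have := div_mul_log_add_one_le_mul_add_exp hβ hT x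
  have hβT : 0 < β / T := div_pos hβ hT
  linarith

lemma rpow_one_sub_div_le_rpow_neg {a A M θ : ℝ} (ha : 0 ≤ a) (haA : a ≤ A) (hM : 0 < M)
    (hMA : M ≤ A) (hθ0 : 0 ≤ θ) (hθ1 : θ ≤ 1) :
    a ^ (1 - θ) / A ≤ M ^ (-θ) := by
  have hA : 0 < A := hM.trans_le hMA
  calc a ^ (1 - θ) / A ≤ A ^ (1 - θ) / A := by gcongr
    _ = A ^ (-θ) := by
      rw [div_eq_iff hA.ne', sub_eq_neg_add, rpow_add_one hA.ne']
    _ ≤ M ^ (-θ) := rpow_le_rpow_of_nonpos hM hMA (by linarith)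

theorem Phi_bound_general (β T lam t : ℝ) (hβ0 : 0 < β) (hT : 0 < T)
    (ht : t ∈ Set.Icc (0 : ℝ) T) (hβT : β < T) :
    Real.exp (-Real.sqrt lam * (T - t)) /
        (2 * β * Real.sqrt lam + 2 * Real.exp (-Real.sqrt lam * T)) ≤
      (1 / 2) * (β / T) ^ (-t / T) * (Real.log (T / β)) ^ (-t / T) := by
  set s := √lam
  set θ := t / T
  have hθ0 : 0 ≤ θ := div_nonneg ht.1 hT.le
  have hθ1 : θ ≤ 1 := (div_le_one hT).mpr ht.2
  have hL : 0 < log (T / β) := log_pos ((one_lt_div hβ0).mpr hβT)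
  have hnum : exp (-s * (T - t)) = exp (-s * T) ^ (1 - θ) := by
    rw [← exp_mul]
    congr 1
    simp only [θ]
    field_simp
  have hbound := rpow_one_sub_div_le_rpow_neg (M := β / T * log (T / β)) (exp_pos (-s * T)).le
    (le_add_of_nonneg_left (by positivity : 0 ≤ β * s)) (by positivity)
    (div_mul_log_le_mul_add_exp hβ0 hT s) hθ0 hθ1
  rw [mul_rpow (by positivity) hL.le] at hbound
  rw [hnum, neg_div]
  linarith [show exp (-s * T) ^ (1 - θ) / (2 * β * s + 2 * exp (-s * T))
    = exp (-s * T) ^ (1 - θ) / (β * s + exp (-s * T)) / 2 by field_simp]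

theorem Phi_bound (β T lam t : ℝ) (hβ0 : 0 < β) (hβ1 : β < 1) (hT : 0 < T)
    (hlam : 0 < lam) (ht : t ∈ Set.Icc (0 : ℝ) T) (hβT : β < T) :
    Real.exp (-Real.sqrt lam * (T - t)) /
        (2 * β * Real.sqrt lam + 2 * Real.exp (-Real.sqrt lam * T)) ≤
      (1 / 2) * (β / T) ^ (-t / T) * (Real.log (T / β)) ^ (-t / T) :=
  Phi_bound_general β T lam t hβ0 hT ht hβT
end

section
/- Let 0 < β < 1 < T, λ ≥ λ₁ > 0, and 0 ≤ s ≤ t ≤ T. Then Ψ(β, λ, s, t) := e^{-√λ(T+s-t)} / (2βλ + 2√λ e^{-√λ T}) satisfies Ψ(β, λ, s, t) ≤ (1/(2√λ₁)) · (β/T)^{(s-t)/T} · (ln(T/β))^{(s-t)/T}. -/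
/-!
Write `μ = √λ`, `θ = (t - s)/T ∈ [0, 1]` and `D = 1 + β μ e^{μT}`. Multiplying numerator and
denominator of `Ψ` by `e^{μT}` gives `Ψ = e^{μ(t-s)} / (2μD) = (e^{μT})^θ / (2μD)`, while the
right-hand side is `(2√λ₁)⁻¹ C^θ` with `C = T / (β log (T/β))`. The elementary bound
`(a - x) e^x ≤ e^a` at `a = log (T/β)`, `x = μT` gives `e^{μT} ≤ C D`, and since `D ≥ 1`,
`(e^{μT})^θ / D ≤ (e^{μT} / D)^θ ≤ C^θ`.
-/

open Real

lemma sub_mul_exp_le_exp (a x : ℝ) : (a - x) * exp x ≤ exp a := by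
  have h : a - x ≤ exp (a - x) := by linarith [add_one_le_exp (a - x)]
  calc (a - x) * exp x ≤ exp (a - x) * exp x := by gcongr
    _ = exp a := by rw [← exp_add, sub_add_cancel]

lemma exp_mul_le_div_mul {β T : ℝ} (hβ : 0 < β) (hβT : β < T) (μ : ℝ) :
    exp (μ * T) ≤ T / (β * log (T / β)) * (1 + β * μ * exp (μ * T)) := by
  have hT : 0 < T := hβ.trans hβT
  have hL : 0 < log (T / β) := log_pos ((one_lt_div hβ).2 hβT)
  have h := sub_mul_exp_le_exp (log (T / β)) (μ * T)
  rw [exp_log (div_pos hT hβ), le_div_iff₀' hβ] at h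
  rw [div_mul_eq_mul_div, le_div_iff₀ (by positivity)]
  nlinarith [exp_pos (μ * T)]

lemma rpow_div_le_rpow_of_le_mul {E C D θ : ℝ} (hE : 0 ≤ E) (hD : 1 ≤ D) (h : E ≤ C * D)
    (hθ0 : 0 ≤ θ) (hθ1 : θ ≤ 1) : E ^ θ / D ≤ C ^ θ := by
  have hD0 : 0 < D := one_pos.trans_le hD
  calc E ^ θ / D ≤ E ^ θ / D ^ θ :=
        div_le_div_of_nonneg_left (rpow_nonneg hE θ) (rpow_pos_of_pos hD0 θ)
          (rpow_le_self_of_one_le hD hθ1)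
    _ = (E / D) ^ θ := (div_rpow hE hD0.le θ).symm
    _ ≤ C ^ θ := rpow_le_rpow (div_nonneg hE hD0.le) ((div_le_iff₀ hD0).2 h) hθ0

lemma exp_neg_mul_div_eq {β μ T r : ℝ} (hβ : 0 ≤ β) (hμ : 0 < μ) :
    exp (-μ * (T - r)) / (2 * β * μ ^ 2 + 2 * μ * exp (-μ * T)) =
      1 / (2 * μ) * (exp (μ * r) / (1 + β * μ * exp (μ * T))) := by
  have hsplit : exp (-μ * (T - r)) = exp (μ * r) * exp (-μ * T) := by
    rw [← exp_add]; ring_nf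
  have hinv : exp (μ * T) * exp (-μ * T) = 1 := by rw [← exp_add]; simp
  rw [one_div_mul_eq_div, div_div, div_eq_div_iff (by positivity) (by positivity), hsplit]
  linear_combination 2 * β * μ ^ 2 * exp (μ * r) * hinv

lemma rpow_neg_mul_rpow_neg {a b θ : ℝ} (ha : 0 < a) (hb : 0 < b) :
    a ^ (-θ) * b ^ (-θ) = (1 / (a * b)) ^ θ := by
  rw [← mul_rpow ha.le hb.le, rpow_neg (mul_pos ha hb).le, one_div, inv_rpow (mul_pos ha hb).le]

theorem Psi_bound (β T lam lam1 s t : ℝ) (hβ0 : 0 < β) (hβ1 : β < 1) (hT : 1 < T)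
    (hlam1 : 0 < lam1) (hlam : lam1 ≤ lam) (hs : 0 ≤ s) (hst : s ≤ t) (ht : t ≤ T) :
    Real.exp (-Real.sqrt lam * (T + s - t)) /
        (2 * β * lam + 2 * Real.sqrt lam * Real.exp (-Real.sqrt lam * T)) ≤
      (1 / (2 * Real.sqrt lam1)) * (β / T) ^ ((s - t) / T) *
        (Real.log (T / β)) ^ ((s - t) / T) := by
  have hT0 : 0 < T := one_pos.trans hT
  have hlam0 : 0 < lam := hlam1.trans_le hlam
  have hμ : 0 < √lam := sqrt_pos.2 hlam0
  have hθ0 : 0 ≤ (t - s) / T := div_nonneg (sub_nonneg.2 hst) hT0.le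
  have hθ1 : (t - s) / T ≤ 1 := (div_le_one hT0).2 (by linarith)
  have hD : 1 ≤ 1 + β * √lam * exp (√lam * T) := le_add_of_nonneg_right (by positivity)
  have hpow : exp (√lam * T) ^ ((t - s) / T) = exp (√lam * (t - s)) := by
    rw [← exp_mul]; congr 1; field_simp
  calc exp (-√lam * (T + s - t)) / (2 * β * lam + 2 * √lam * exp (-√lam * T))
      = 1 / (2 * √lam) *
          (exp (√lam * T) ^ ((t - s) / T) / (1 + β * √lam * exp (√lam * T))) := by
        rw [show T + s - t = T - (t - s) by ring, hpow,
          ← exp_neg_mul_div_eq hβ0.le hμ, sq_sqrt hlam0.le]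
    _ ≤ 1 / (2 * √lam1) * (T / (β * log (T / β))) ^ ((t - s) / T) := by
        gcongr
        exact rpow_div_le_rpow_of_le_mul (exp_pos _).le hD
            (exp_mul_le_div_mul hβ0 (hβ1.trans hT) _) hθ0 hθ1
    _ = _ := by
        rw [mul_assoc, show (s - t) / T = -((t - s) / T) by ring,
          rpow_neg_mul_rpow_neg (div_pos hβ0 hT0) (log_pos ((one_lt_div hβ0).2 (hβ1.trans hT)))]
        field_simp
end

section
/- Let 0 < β < 1, T > 0, λ > 0, and t ∈ [T/2, T]. Then e^{√λ(t-T)} / (β + e^{-√λ t}) ≤ β^{(T-t)/t − 1}. -/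
theorem kernel_bound_second_half (β T lam t : ℝ) (hβ0 : 0 < β) (hβ1 : β < 1)
    (hT : 0 < T) (hlam : 0 < lam) (ht : t ∈ Set.Icc (T / 2) T) :
    Real.exp (Real.sqrt lam * (t - T)) / (β + Real.exp (-Real.sqrt lam * t)) ≤
      β ^ ((T - t) / t - 1) := by
  obtain ⟨ht1, ht2⟩ := ht
  have ht0 : 0 < t := lt_of_lt_of_le (by linarith) ht1
  set s := Real.sqrt lam with hs
  have hs0 : 0 < s := Real.sqrt_pos.mpr hlam
  set a : ℝ := (T - t) / t with ha
  have ha0 : 0 ≤ a := div_nonneg (by linarith) ht0.le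
  have ha1 : a ≤ 1 := by rw [ha, div_le_one ht0]; linarith
  set x : ℝ := Real.exp (-s * t) with hxdef
  have hx0 : (0:ℝ) < x := Real.exp_pos _
  have hta : t * a = T - t := by
    rw [ha]; field_simp
  have hxa : x ^ a = Real.exp (s * (t - T)) := by
    rw [hxdef, ← Real.exp_mul]
    congr 1
    nlinarith [hta]
  have hmax : β ^ (1 - a) * x ^ a ≤ β + x := by
    have h1 : β ^ (1 - a) ≤ (max β x) ^ (1 - a) :=
      Real.rpow_le_rpow hβ0.le (le_max_left _ _) (by linarith)
    have h2 : x ^ a ≤ (max β x) ^ a :=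
      Real.rpow_le_rpow hx0.le (le_max_right _ _) ha0
    have hm0 : 0 < max β x := lt_max_of_lt_left hβ0
    calc β ^ (1 - a) * x ^ a ≤ (max β x) ^ (1 - a) * (max β x) ^ a := by
          apply mul_le_mul h1 h2 (Real.rpow_nonneg hx0.le _) (Real.rpow_nonneg hm0.le _)
      _ = max β x := by
          rw [← Real.rpow_add hm0]; simp
      _ ≤ β + x := by
          rcases le_total β x with h | h
          · rw [max_eq_right h]; linarith
          · rw [max_eq_left h]; linarith
  have hden : 0 < β + x := by positivity
  rw [div_le_iff₀ hden]
  have hb : (0:ℝ) < β ^ (a - 1) := Real.rpow_pos_of_pos hβ0 _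
  have key := mul_le_mul_of_nonneg_left hmax hb.le
  calc Real.exp (s * (t - T)) = β ^ (a - 1) * (β ^ (1 - a) * x ^ a) := by
        rw [← mul_assoc, ← Real.rpow_add hβ0]
        simp [hxa]
    _ ≤ β ^ (a - 1) * (β + x) := key
end

section
/- Let H be a real Hilbert space with orthonormal basis (φ_p)_{p≥1}, let λ₁ > 0, and let (λ_p) satisfy λ_p ≥ λ₁ for all p. Let 0 < β < 1, t ≥ 0, and define, for φ, φ^ε, g, g^ε ∈ H, u^ε(t) − v^ε(t) = Σ_p [ (⟨φ−φ^ε, φ_p⟩ + ⟨g−g^ε, φ_p⟩/√λ_p) / (2β + 2e^{-√λ_p t}) + (e^{-√λ_p t}/2)(⟨φ−φ^ε, φ_p⟩ − ⟨g−g^ε, φ_p⟩/√λ_p) ] φ_p. If ‖φ−φ^ε‖ ≤ ε and ‖g−g^ε‖ ≤ ε, then ‖u^ε(t) − v^ε(t)‖ ≤ √(2(1 + 1/λ₁)) · ε/β. -/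
/-!
By Parseval, `‖d‖²` is the sum of the squared coefficients. Writing `a = ⟪φ - φε, φ_p⟫`,
`b = ⟪g - gε, φ_p⟫ / √λ_p` and `E = e^{-√λ_p t} ∈ (0, 1]`, the bounds `1 / (2β + 2E) ≤ 1 / (2β)` and
`E / 2 ≤ 1 / (2β)` give `|c_p| ≤ (|a| + |b|) / β`, hence `c_p² ≤ 2 (a² + b²) / β²` with
`b² ≤ ⟪g - gε, φ_p⟫² / λ₁`. Bessel's inequality then sums these to `2 (1 + 1 / λ₁) ε² / β²`.
-/

open scoped RealInnerProductSpace

namespace Orthonormal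

variable {ι H : Type*} [NormedAddCommGroup H] [InnerProductSpace ℝ H] {v : ι → H}

theorem inner_right_of_hasSum (hv : Orthonormal ℝ v) {c : ι → ℝ} {d : H}
    (hd : HasSum (fun i => c i • v i) d) (i : ι) : ⟪v i, d⟫ = c i := by
  classical
  have hinner : HasSum (fun j => ⟪v i, c j • v j⟫) ⟪v i, d⟫ := hd.mapL (innerSL ℝ (v i))
  have hsingle : (fun j => ⟪v i, c j • v j⟫) = fun j => if j = i then c i else 0 := by
    funext j
    rw [real_inner_smul_right, orthonormal_iff_ite.mp hv i j]
    by_cases hji : j = i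
    · simp [hji]
    · simp [hji, Ne.symm hji]
  rw [hsingle] at hinner
  exact hinner.unique (hasSum_ite_eq i (c i))

theorem hasSum_sq_of_hasSum (hv : Orthonormal ℝ v) {c : ι → ℝ} {d : H}
    (hd : HasSum (fun i => c i • v i) d) : HasSum (fun i => c i ^ 2) (‖d‖ ^ 2) := by
  have hinner : HasSum (fun i => ⟪d, c i • v i⟫) ⟪d, d⟫ := hd.mapL (innerSL ℝ d)
  have hterm : (fun i => ⟪d, c i • v i⟫) = fun i => c i ^ 2 := by
    funext i
    rw [real_inner_smul_right, real_inner_comm, hv.inner_right_of_hasSum hd i, sq]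
  rwa [hterm, real_inner_self_eq_norm_sq] at hinner

theorem summable_inner_sq (hv : Orthonormal ℝ v) (x : H) :
    Summable fun i => ⟪x, v i⟫ ^ 2 := by
  simpa [Real.norm_eq_abs, sq_abs, real_inner_comm] using hv.inner_products_summable x

theorem tsum_inner_sq_le (hv : Orthonormal ℝ v) (x : H) : ∑' i, ⟪x, v i⟫ ^ 2 ≤ ‖x‖ ^ 2 := by
  simpa [Real.norm_eq_abs, sq_abs, real_inner_comm] using hv.tsum_inner_products_le x

theorem norm_sq_le_of_hasSum (hv : Orthonormal ℝ v) {c : ι → ℝ} {d x y : H} {a b : ℝ}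
    (hd : HasSum (fun i => c i • v i) d) (ha : 0 ≤ a) (hb : 0 ≤ b)
    (hc : ∀ i, c i ^ 2 ≤ a * ⟪x, v i⟫ ^ 2 + b * ⟪y, v i⟫ ^ 2) :
    ‖d‖ ^ 2 ≤ a * ‖x‖ ^ 2 + b * ‖y‖ ^ 2 := by
  have hsum := hv.hasSum_sq_of_hasSum hd
  have hx := hv.summable_inner_sq x
  have hy := hv.summable_inner_sq y
  calc ‖d‖ ^ 2 = ∑' i, c i ^ 2 := hsum.tsum_eq.symm
    _ ≤ ∑' i, (a * ⟪x, v i⟫ ^ 2 + b * ⟪y, v i⟫ ^ 2) :=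
        hsum.summable.tsum_le_tsum hc ((hx.mul_left a).add (hy.mul_left b))
    _ = a * ∑' i, ⟪x, v i⟫ ^ 2 + b * ∑' i, ⟪y, v i⟫ ^ 2 := by
        rw [(hx.mul_left a).tsum_add (hy.mul_left b), tsum_mul_left, tsum_mul_left]
    _ ≤ a * ‖x‖ ^ 2 + b * ‖y‖ ^ 2 := by
        gcongr
        exacts [hv.tsum_inner_sq_le x, hv.tsum_inner_sq_le y]

end Orthonormal

theorem abs_regularized_coeff_le {β E a b : ℝ} (hβ0 : 0 < β) (hβ1 : β ≤ 1) (hE0 : 0 ≤ E)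
    (hE1 : E ≤ 1) : |(a + b) / (2 * β + 2 * E) + E / 2 * (a - b)| ≤ (|a| + |b|) / β := by
  have hfirst : |(a + b) / (2 * β + 2 * E)| ≤ (|a| + |b|) / (2 * β) := by
    rw [abs_div, abs_of_pos (by positivity : (0 : ℝ) < 2 * β + 2 * E)]
    exact div_le_div₀ (by positivity) (abs_add_le a b) (by positivity) (by linarith)
  have hsecond : |E / 2 * (a - b)| ≤ (|a| + |b|) / (2 * β) := by
    rw [abs_mul, abs_of_nonneg (by positivity)]
    calc E / 2 * |a - b| ≤ 1 / 2 * (|a| + |b|) :=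
          mul_le_mul (by linarith) (abs_sub a b) (abs_nonneg _) (by norm_num)
      _ ≤ (|a| + |b|) / (2 * β) := by
          rw [one_div_mul_eq_div]
          exact div_le_div_of_nonneg_left (by positivity) (by positivity) (by linarith)
  calc _ ≤ |(a + b) / (2 * β + 2 * E)| + |E / 2 * (a - b)| := abs_add_le _ _
    _ ≤ (|a| + |b|) / (2 * β) + (|a| + |b|) / (2 * β) := add_le_add hfirst hsecond
    _ = (|a| + |b|) / β := by field_simp; ring

theorem sq_regularized_coeff_le {β E a b : ℝ} (hβ0 : 0 < β) (hβ1 : β ≤ 1) (hE0 : 0 ≤ E)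
    (hE1 : E ≤ 1) :
    ((a + b) / (2 * β + 2 * E) + E / 2 * (a - b)) ^ 2 ≤ 2 * (a ^ 2 + b ^ 2) / β ^ 2 := by
  calc _ = |(a + b) / (2 * β + 2 * E) + E / 2 * (a - b)| ^ 2 := (sq_abs _).symm
    _ ≤ ((|a| + |b|) / β) ^ 2 :=
        pow_le_pow_left₀ (abs_nonneg _) (abs_regularized_coeff_le hβ0 hβ1 hE0 hE1) 2
    _ ≤ 2 * (|a| ^ 2 + |b| ^ 2) / β ^ 2 := by rw [div_pow]; gcongr; exact add_sq_le
    _ = 2 * (a ^ 2 + b ^ 2) / β ^ 2 := by rw [sq_abs, sq_abs]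

theorem stability_estimate_general {H : Type*} [NormedAddCommGroup H] [InnerProductSpace ℝ H]
    (φb : ℕ → H) (hφb : Orthonormal ℝ φb) (lam : ℕ → ℝ) (lam1 : ℝ)
    (hlam1 : 0 < lam1) (hlam : ∀ p, lam1 ≤ lam p)
    (β t ε : ℝ) (hβ0 : 0 < β) (hβ1 : β < 1) (ht : 0 ≤ t)
    (φv φε g gε d : H)
    (hφ : ‖φv - φε‖ ≤ ε) (hg : ‖g - gε‖ ≤ ε)
    (hd : HasSum (fun p : ℕ =>
      ((⟪φv - φε, φb p⟫ + ⟪g - gε, φb p⟫ / Real.sqrt (lam p)) /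
          (2 * β + 2 * Real.exp (-Real.sqrt (lam p) * t)) +
        (Real.exp (-Real.sqrt (lam p) * t) / 2) *
          (⟪φv - φε, φb p⟫ - ⟪g - gε, φb p⟫ / Real.sqrt (lam p))) • φb p) d) :
    ‖d‖ ≤ Real.sqrt (2 * (1 + 1 / lam1)) * ε / β := by
  have hε : 0 ≤ ε := (norm_nonneg _).trans hφ
  have hnorm : ‖d‖ ^ 2 ≤ 2 / β ^ 2 * ‖φv - φε‖ ^ 2 + 2 / (β ^ 2 * lam1) * ‖g - gε‖ ^ 2 := by
    refine hφb.norm_sq_le_of_hasSum hd (by positivity) (by positivity) fun p => ?_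
    have hlamp : 0 < lam p := hlam1.trans_le (hlam p)
    have hexp : Real.exp (-Real.sqrt (lam p) * t) ≤ 1 :=
      Real.exp_le_one_iff.mpr (mul_nonpos_of_nonpos_of_nonneg (by simp) ht)
    calc _ ≤ 2 * (⟪φv - φε, φb p⟫ ^ 2 + (⟪g - gε, φb p⟫ / Real.sqrt (lam p)) ^ 2) / β ^ 2 :=
          sq_regularized_coeff_le hβ0 hβ1.le (Real.exp_pos _).le hexp
      _ = 2 / β ^ 2 * ⟪φv - φε, φb p⟫ ^ 2 + 2 / (β ^ 2 * lam p) * ⟪g - gε, φb p⟫ ^ 2 := by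
          rw [div_pow, Real.sq_sqrt hlamp.le]; field_simp
      _ ≤ _ := by gcongr; exact hlam p
  rw [← pow_le_pow_iff_left₀ (norm_nonneg d) (by positivity) two_ne_zero]
  calc ‖d‖ ^ 2 ≤ 2 / β ^ 2 * ε ^ 2 + 2 / (β ^ 2 * lam1) * ε ^ 2 := hnorm.trans (by gcongr)
    _ = _ := by rw [div_pow, mul_pow, Real.sq_sqrt (by positivity)]; field_simp

theorem stability_estimate {H : Type*} [NormedAddCommGroup H] [InnerProductSpace ℝ H]
    (φb : ℕ → H) (hφb : Orthonormal ℝ φb) (lam : ℕ → ℝ) (lam1 : ℝ)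
    (hlam1 : 0 < lam1) (hlam : ∀ p, lam1 ≤ lam p)
    (β t ε : ℝ) (hβ0 : 0 < β) (hβ1 : β < 1) (ht : 0 ≤ t) (hε : 0 ≤ ε)
    (φv φε g gε d : H)
    (hφ : ‖φv - φε‖ ≤ ε) (hg : ‖g - gε‖ ≤ ε)
    (hd : HasSum (fun p : ℕ =>
      ((⟪φv - φε, φb p⟫ + ⟪g - gε, φb p⟫ / Real.sqrt (lam p)) /
          (2 * β + 2 * Real.exp (-Real.sqrt (lam p) * t)) +
        (Real.exp (-Real.sqrt (lam p) * t) / 2) *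
          (⟪φv - φε, φb p⟫ - ⟪g - gε, φb p⟫ / Real.sqrt (lam p))) • φb p) d) :
    ‖d‖ ≤ Real.sqrt (2 * (1 + 1 / lam1)) * ε / β :=
  stability_estimate_general φb hφb lam lam1 hlam1 hlam β t ε hβ0 hβ1 ht φv φε g gε d hφ hg hd
end

section
/- Let λ₁ > 0, 0 < β < 1, T > 0, λ > 0, and t ∈ [T/2, T]. Then β e^{-√λ(T-t)} / (2β√λ + 2√λ e^{-√λ t}) ≤ (1/(2√λ₁)) · β^{(T-t)/t} · [√λ₁ T / (1 + ln(√λ₁ T / β))]^{(2t-T)/t}, provided λ ≥ λ₁ and √λ₁ T > β. -/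
/-!
Write `s = √λ`, `A = e^{-s t}`, `θ = (T - t)/t`, `ν = (2t - T)/t`, so that `θ + ν = 1` and
`e^{-s(T-t)} = A^θ`. Splitting `β = β^θ β^ν`, the left side is at most `β^θ (β/(β+A))^ν / (2s)`.
The tangent-line bound `1 + x ≤ e^x` at `x = log (sT/β) - s t` gives
`β (1 + log (√λ₁ T/β)) ≤ s T (β + A)`, i.e. `β/(β+A) ≤ (s/√λ₁) X` with
`X = √λ₁ T / (1 + log (√λ₁ T/β))`, and raising to the power `ν ≤ 1` costs at most the factor
`s/√λ₁ ≥ 1`.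
-/

open Real

lemma mul_one_add_log_div_le {β u : ℝ} (hβ : 0 < β) (hu : 0 < u) (x : ℝ) :
    β * (1 + log (u / β)) ≤ u * exp (-x) + β * x := by
  have h := add_one_le_exp (log (u / β) - x)
  rw [exp_sub, exp_log (div_pos hu hβ)] at h
  calc β * (1 + log (u / β)) = β * (log (u / β) - x + 1) + β * x := by ring
    _ ≤ β * (u / β / exp x) + β * x := by gcongr
    _ = u * exp (-x) + β * x := by rw [exp_neg]; field_simp

lemma mul_one_add_log_le_mul_add_exp {β T s₁ s t : ℝ} (hβ : 0 < β) (hT : 0 < T)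
    (hs₁ : 0 < s₁) (hs₁s : s₁ ≤ s) (htT : t ≤ T) :
    β * (1 + log (s₁ * T / β)) ≤ s * T * (β + exp (-s * t)) := by
  have hs : 0 < s := hs₁.trans_le hs₁s
  calc β * (1 + log (s₁ * T / β)) ≤ β * (1 + log (s * T / β)) := by gcongr
    _ ≤ s * T * exp (-(s * t)) + β * (s * t) := mul_one_add_log_div_le hβ (by positivity) _
    _ ≤ s * T * (β + exp (-s * t)) := by
        rw [neg_mul]
        nlinarith [mul_le_mul_of_nonneg_left htT (mul_pos hβ hs).le]

lemma rpow_le_mul_rpow_of_le_mul {a b c ν : ℝ} (ha : 0 ≤ a) (hb : 0 ≤ b) (hc : 1 ≤ c)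
    (hν0 : 0 ≤ ν) (hν1 : ν ≤ 1) (h : a ≤ c * b) : a ^ ν ≤ c * b ^ ν :=
  calc a ^ ν ≤ (c * b) ^ ν := rpow_le_rpow ha h hν0
    _ = c ^ ν * b ^ ν := mul_rpow (by linarith) hb
    _ ≤ c * b ^ ν := by gcongr; exact rpow_le_self_of_one_le hc hν1

lemma rpow_mul_rpow_div_add_le {a b θ ν : ℝ} (ha : 0 < a) (hb : 0 ≤ b) (hθ : 0 ≤ θ)
    (hθν : θ + ν = 1) : a ^ ν * b ^ θ / (a + b) ≤ (a / (a + b)) ^ ν := by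
  have hab : 0 < a + b := by linarith
  have hsplit : a + b = (a + b) ^ ν * (a + b) ^ θ := by
    rw [← rpow_add hab, add_comm ν θ, hθν, rpow_one]
  calc a ^ ν * b ^ θ / (a + b) ≤ a ^ ν * (a + b) ^ θ / (a + b) := by
        gcongr; linarith
    _ = a ^ ν / (a + b) ^ ν := by
        nth_rw 2 [hsplit]
        field_simp [(rpow_pos_of_pos hab θ).ne']
    _ = (a / (a + b)) ^ ν := (div_rpow ha.le hab.le ν).symm

theorem error_kernel_second_half_general (β T lam lam1 t : ℝ) (hβ0 : 0 < β)
    (hT : 0 < T) (hlam1 : 0 < lam1) (hlam : lam1 ≤ lam)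
    (ht : t ∈ Set.Icc (T / 2) T) (hβT : β < Real.sqrt lam1 * T) :
    β * Real.exp (-Real.sqrt lam * (T - t)) /
        (2 * β * Real.sqrt lam + 2 * Real.sqrt lam * Real.exp (-Real.sqrt lam * t)) ≤
      (1 / (2 * Real.sqrt lam1)) * β ^ ((T - t) / t) *
        (Real.sqrt lam1 * T / (1 + Real.log (Real.sqrt lam1 * T / β))) ^ ((2 * t - T) / t) := by
  obtain ⟨htT2, htT⟩ := ht
  have ht0 : 0 < t := by linarith
  set s₁ := √lam1
  set s := √lam
  have hs₁ : 0 < s₁ := sqrt_pos.2 hlam1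
  have hs₁s : s₁ ≤ s := sqrt_le_sqrt hlam
  have hs : 0 < s := hs₁.trans_le hs₁s
  set A := exp (-s * t)
  set θ := (T - t) / t
  set ν := (2 * t - T) / t
  have hθ : 0 ≤ θ := div_nonneg (by linarith) ht0.le
  have hν0 : 0 ≤ ν := div_nonneg (by linarith) ht0.le
  have hν1 : ν ≤ 1 := (div_le_one ht0).2 (by linarith)
  have hθν : θ + ν = 1 := by simp only [θ, ν]; field_simp; ring
  have hβ : β ^ θ * β ^ ν = β := by rw [← rpow_add hβ0, hθν, rpow_one]
  have hexp : exp (-s * (T - t)) = A ^ θ := by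
    rw [← exp_mul]; simp only [θ]; field_simp
  set D := 1 + log (s₁ * T / β)
  have hD : 0 < D := by have := log_pos ((one_lt_div hβ0).2 hβT); positivity
  have hratio : β / (β + A) ≤ s / s₁ * (s₁ * T / D) := by
    have hβD := mul_one_add_log_le_mul_add_exp hβ0 hT hs₁ hs₁s htT
    rw [show s / s₁ * (s₁ * T / D) = s * T / D by field_simp, div_le_div_iff₀ (by positivity) hD]
    linarith
  calc β * exp (-s * (T - t)) / (2 * β * s + 2 * s * A)
      = β ^ θ * (β ^ ν * A ^ θ / (β + A)) / (2 * s) := by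
        rw [hexp]
        nth_rw 1 [← hβ]
        field_simp
    _ ≤ β ^ θ * (β / (β + A)) ^ ν / (2 * s) := by
        gcongr; exact rpow_mul_rpow_div_add_le hβ0 (exp_pos _).le hθ hθν
    _ ≤ β ^ θ * (s / s₁ * (s₁ * T / D) ^ ν) / (2 * s) := by
        gcongr
        exact rpow_le_mul_rpow_of_le_mul (by positivity) (by positivity)
          ((one_le_div hs₁).2 hs₁s) hν0 hν1 hratio
    _ = 1 / (2 * s₁) * β ^ θ * (s₁ * T / D) ^ ν := by field_simp

theorem error_kernel_second_half (β T lam lam1 t : ℝ) (hβ0 : 0 < β) (hβ1 : β < 1)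
    (hT : 0 < T) (hlam1 : 0 < lam1) (hlam : lam1 ≤ lam)
    (ht : t ∈ Set.Icc (T / 2) T) (hβT : β < Real.sqrt lam1 * T) :
    β * Real.exp (-Real.sqrt lam * (T - t)) /
        (2 * β * Real.sqrt lam + 2 * Real.sqrt lam * Real.exp (-Real.sqrt lam * t)) ≤
      (1 / (2 * Real.sqrt lam1)) * β ^ ((T - t) / t) *
        (Real.sqrt lam1 * T / (1 + Real.log (Real.sqrt lam1 * T / β))) ^ ((2 * t - T) / t) :=
  error_kernel_second_half_general β T lam lam1 t hβ0 hT hlam1 hlam ht hβT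
end

section
/- Let 0 < β < 1 < T/β, λ ≥ λ₁ > 0, T > 0, and 0 ≤ s ≤ t ≤ T. Then (Ψ(β,λ,s,t) − e^{√λ(s-t)}/(2√λ))² ≤ (1/λ₁)(β/T)^{(2s-2t)/T}(ln(T/β))^{(2s-2t)/T}, where Ψ(β,λ,s,t) = e^{-√λ(T+s-t)}/(2βλ + 2√λ e^{-√λ T}). -/
/-!
With `r = √λ`, `x = rT`, `y = T/β` and `θ = (t - s)/T ∈ [0, 1]`, one has
`2rΨ = e^{θx} / (1 + x eˣ / y)`. The denominator is at least `1` and at least `(x eˣ / y)^θ`,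
so `2rΨ ≤ min (eˣ, y/x)^θ`, and `min (eˣ, y/x) ≤ 2y / log y` (split at `x = log y / 2`).
Hence `Ψ ≤ K/r` with `K = (y / log y)^θ ≥ 1`; the same bound holds for `e^{r(s-t)}/(2r) ≤ 1/(2r)`,
so the square of the difference of these two nonnegative numbers is at most `K²/λ ≤ K²/λ₁`.
-/

open Real

noncomputable def Psi (β T lam s t : ℝ) : ℝ :=
  exp (-√lam * (T + s - t)) / (2 * β * lam + 2 * √lam * exp (-√lam * T))

lemma rpow_le_one_add {y θ : ℝ} (hy : 0 ≤ y) (hθ0 : 0 ≤ θ) (hθ1 : θ ≤ 1) : y ^ θ ≤ 1 + y := by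
  rcases le_total y 1 with h | h
  · linarith [rpow_le_one hy h hθ0]
  · linarith [rpow_le_self_of_one_le h hθ1]

lemma exp_mul_div_one_add_le_min_rpow {x y θ : ℝ} (hx : 0 < x) (hy : 0 < y) (hθ0 : 0 ≤ θ)
    (hθ1 : θ ≤ 1) : exp (θ * x) / (1 + x * exp x / y) ≤ min (exp x) (y / x) ^ θ := by
  have hz : 0 ≤ x * exp x / y := by positivity
  rcases min_choice (exp x) (y / x) with h | h <;> rw [h]
  · rw [← exp_mul, mul_comm]
    exact div_le_self (exp_nonneg _) (le_add_of_nonneg_right hz)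
  · rw [div_le_iff₀ (by positivity)]
    calc exp (θ * x) = (y / x * (x * exp x / y)) ^ θ := by
          rw [mul_comm θ x, exp_mul]; congr 1; field_simp
      _ = (y / x) ^ θ * (x * exp x / y) ^ θ := mul_rpow (by positivity) hz
      _ ≤ (y / x) ^ θ * (1 + x * exp x / y) := by gcongr; exact rpow_le_one_add hz hθ0 hθ1

lemma min_exp_div_le {x y : ℝ} (hy : 1 < y) :
    min (exp x) (y / x) ≤ 2 * (y / log y) := by
  have hL : 0 < log y := log_pos hy
  rcases le_total x (log y / 2) with h | h
  · have hsq : exp (log y / 2) * exp (log y / 2) = y := by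
      rw [← exp_add, add_halves, exp_log (by linarith)]
    have hlog : log y ≤ 2 * exp (log y / 2) := by linarith [add_one_le_exp (log y / 2)]
    calc min (exp x) (y / x) ≤ exp (log y / 2) := (min_le_left _ _).trans (exp_le_exp.2 h)
      _ ≤ 2 * (y / log y) := by
        rw [mul_div_assoc', le_div_iff₀ hL]
        nlinarith [exp_pos (log y / 2)]
  · calc min (exp x) (y / x) ≤ y / (log y / 2) :=
          (min_le_right _ _).trans (div_le_div_of_nonneg_left (by linarith) (by positivity) h)
      _ = 2 * (y / log y) := by field_simp

lemma Psi_eq (β : ℝ) {T lam : ℝ} (s t : ℝ) (hT : T ≠ 0) (hlam : 0 < lam) :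
    Psi β T lam s t = exp ((t - s) / T * (√lam * T)) /
      (1 + √lam * T * exp (√lam * T) / (T / β)) / (2 * √lam) := by
  have hr : 0 < √lam := sqrt_pos.2 hlam
  have hexp : exp (-√lam * (T + s - t)) = exp (√lam * (t - s)) / exp (√lam * T) := by
    rw [← exp_sub]; ring_nf
  have hθx : (t - s) / T * (√lam * T) = √lam * (t - s) := by field_simp
  have hβlam : 2 * β * lam = 2 * β * √lam * √lam := by
    rw [mul_assoc _ √lam, mul_self_sqrt hlam.le]
  rw [Psi, hexp, hθx, hβlam, neg_mul, exp_neg]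
  field_simp
  ring

lemma Psi_le {β T lam s t : ℝ} (hβ : 0 < β) (hβT : 1 < T / β) (hT : 0 < T) (hlam : 0 < lam)
    (hst : 0 ≤ t - s) (htsT : t - s ≤ T) :
    Psi β T lam s t ≤ (T / β / log (T / β)) ^ ((t - s) / T) / √lam := by
  have hr : 0 < √lam := sqrt_pos.2 hlam
  have hθ0 : 0 ≤ (t - s) / T := div_nonneg hst hT.le
  have hθ1 : (t - s) / T ≤ 1 := (div_le_one hT).2 htsT
  have htwo : (2 : ℝ) ^ ((t - s) / T) ≤ 2 := rpow_le_self_of_one_le one_le_two hθ1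
  rw [Psi_eq β s t hT.ne' hlam]
  calc _ ≤ min (exp (√lam * T)) (T / β / (√lam * T)) ^ ((t - s) / T) / (2 * √lam) := by
        gcongr
        exact exp_mul_div_one_add_le_min_rpow (by positivity) (by positivity) hθ0 hθ1
    _ ≤ (2 * (T / β / log (T / β))) ^ ((t - s) / T) / (2 * √lam) := by
        gcongr
        exact min_exp_div_le hβT
    _ ≤ 2 * (T / β / log (T / β)) ^ ((t - s) / T) / (2 * √lam) := by
        rw [mul_rpow zero_le_two (div_nonneg (by positivity) (log_pos hβT).le)]
        gcongr
        exact rpow_nonneg (div_nonneg (by positivity) (log_pos hβT).le) _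
    _ = _ := by field_simp

lemma inv_rpow_mul_log_rpow_neg_two_mul {y : ℝ} (hy : 1 ≤ y) (θ : ℝ) :
    y⁻¹ ^ (-2 * θ) * log y ^ (-2 * θ) = ((y / log y) ^ θ) ^ 2 := by
  have hy0 : 0 < y := zero_lt_one.trans_le hy
  have hL : 0 ≤ log y := log_nonneg hy
  rw [← mul_rpow (inv_nonneg.2 hy0.le) hL, neg_mul, rpow_neg (by positivity),
    ← inv_rpow (by positivity), mul_inv, inv_inv, ← div_eq_mul_inv, mul_comm,
    rpow_mul (by positivity), rpow_two]

theorem Psi_difference_sq_bound_general (β T lam lam1 s t : ℝ) (hβ0 : 0 < β)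
    (hβT : 1 < T / β) (hT : 0 < T) (hlam1 : 0 < lam1) (hlam : lam1 ≤ lam)
    (hs : 0 ≤ s) (hst : s ≤ t) (ht : t ≤ T) :
    (Real.exp (-Real.sqrt lam * (T + s - t)) /
          (2 * β * lam + 2 * Real.sqrt lam * Real.exp (-Real.sqrt lam * T)) -
        Real.exp (Real.sqrt lam * (s - t)) / (2 * Real.sqrt lam)) ^ 2 ≤
      (1 / lam1) * (β / T) ^ ((2 * s - 2 * t) / T) *
        (Real.log (T / β)) ^ ((2 * s - 2 * t) / T) := by
  have hlam0 : 0 < lam := hlam1.trans_le hlam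
  have hr : 0 < √lam := sqrt_pos.2 hlam0
  have hθ0 : 0 ≤ (t - s) / T := div_nonneg (by linarith) hT.le
  set K := (T / β / log (T / β)) ^ ((t - s) / T)
  have hK1 : 1 ≤ K :=
    one_le_rpow ((one_le_div (log_pos hβT)).2 (log_le_self (by positivity))) hθ0
  have hΨ : Psi β T lam s t ≤ K / √lam := Psi_le hβ0 hβT hT hlam0 (by linarith) (by linarith)
  have hA : exp (√lam * (s - t)) / (2 * √lam) ≤ K / √lam :=
    calc exp (√lam * (s - t)) / (2 * √lam) ≤ 1 / (2 * √lam) := by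
          gcongr
          exact exp_le_one_iff.2 (mul_nonpos_of_nonneg_of_nonpos hr.le (sub_nonpos.2 hst))
      _ ≤ K / √lam := by rw [div_le_div_iff₀ (by positivity) hr]; nlinarith
  have hRHS : (1 / lam1) * (β / T) ^ ((2 * s - 2 * t) / T) * log (T / β) ^ ((2 * s - 2 * t) / T)
      = K ^ 2 / lam1 := by
    rw [show (2 * s - 2 * t) / T = -2 * ((t - s) / T) by ring, ← inv_div T β, mul_assoc,
      inv_rpow_mul_log_rpow_neg_two_mul hβT.le, one_div_mul_eq_div]
  have hdiff : |Psi β T lam s t - exp (√lam * (s - t)) / (2 * √lam)| ≤ K / √lam :=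
    abs_sub_le_of_nonneg_of_le (by unfold Psi; positivity) hΨ (by positivity) hA
  calc (Psi β T lam s t - exp (√lam * (s - t)) / (2 * √lam)) ^ 2 ≤ (K / √lam) ^ 2 :=
        sq_le_sq' (abs_le.1 hdiff).1 (abs_le.1 hdiff).2
    _ = K ^ 2 / lam := by rw [div_pow, sq_sqrt hlam0.le]
    _ ≤ K ^ 2 / lam1 := by gcongr
    _ = _ := hRHS.symm

theorem Psi_difference_sq_bound (β T lam lam1 s t : ℝ) (hβ0 : 0 < β) (hβ1 : β < 1)
    (hβT : 1 < T / β) (hT : 0 < T) (hlam1 : 0 < lam1) (hlam : lam1 ≤ lam)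
    (hs : 0 ≤ s) (hst : s ≤ t) (ht : t ≤ T) :
    (Real.exp (-Real.sqrt lam * (T + s - t)) /
          (2 * β * lam + 2 * Real.sqrt lam * Real.exp (-Real.sqrt lam * T)) -
        Real.exp (Real.sqrt lam * (s - t)) / (2 * Real.sqrt lam)) ^ 2 ≤
      (1 / lam1) * (β / T) ^ ((2 * s - 2 * t) / T) *
        (Real.log (T / β)) ^ ((2 * s - 2 * t) / T) :=
  Psi_difference_sq_bound_general β T lam lam1 s t hβ0 hβT hT hlam1 hlam hs hst ht
end
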